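/- arXiv:1208.3994 — 6 statements merged into one kernel-verified Lean document; each statement's English description precedes it below -/
import Mathlib

section
/- Let p: ℝ₊ → (0,1] be non-increasing and log-convex (i.e., x ↦ log p(x) is convex) with p(0) = v ∈ (0,1], and let ℓ > 0. If x* ≥ 0 minimizes ℓ·p(x) + x over x ≥ 0, then x* ≤ ℓ·v/e. -/
/-- Theorem 2 (the 1/e rule): if p : ℝ₊ → (0,1] is non-increasing and
log-convex with p(0) = v, ℓ > 0, and xstar minimizes ℓ·p(x) + x over x ≥ 0,
then xstar ≤ ℓ·v / e. -/
theorem stmt_3 (p : ℝ → ℝ) (v ℓ : ℝ)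
    (hv : v ∈ Set.Ioc (0:ℝ) 1) (hℓ : 0 < ℓ)
    (hrange : ∀ x, 0 ≤ x → p x ∈ Set.Ioc (0:ℝ) 1)
    (hmono : AntitoneOn p (Set.Ici (0:ℝ)))
    (hlogconvex : ConvexOn ℝ (Set.Ici (0:ℝ)) (fun x => Real.log (p x)))
    (hp0 : p 0 = v)
    (xstar : ℝ) (hxstar : 0 ≤ xstar)
    (hmin : ∀ x, 0 ≤ x → ℓ * p xstar + xstar ≤ ℓ * p x + x) :
    xstar ≤ ℓ * v / Real.exp 1 := by
  set q : ℝ := p xstar with hq_def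
  have hq := hrange xstar hxstar
  have hq0 : 0 < q := hq.1
  have hv0 : 0 < v := hv.1
  have hqv : q ≤ v := by
    have := hmono (Set.self_mem_Ici) (Set.mem_Ici.2 hxstar) hxstar
    rw [hp0] at this; exact this
  set c : ℝ := Real.log q - Real.log v with hc_def
  set f : ℝ → ℝ := fun t => Real.exp (Real.log v + t * c) with hf_def
  have hf1 : f 1 = q := by
    simp only [hf_def, one_mul, hc_def]
    rw [show Real.log v + (Real.log q - Real.log v) = Real.log q by ring,
      Real.exp_log hq0]
  -- key inequality
  have key : ∀ t ∈ Set.Ioo (0:ℝ) 1, (1 - t) * xstar ≤ ℓ * (f t - q) := by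
    intro t ht
    have ht0 : 0 ≤ t := le_of_lt ht.1
    have ht1 : t ≤ 1 := le_of_lt ht.2
    have hx0 : (0:ℝ) ≤ t * xstar := mul_nonneg ht0 hxstar
    have hconv := hlogconvex.2 (Set.self_mem_Ici) (Set.mem_Ici.2 hxstar)
      (sub_nonneg.2 ht1) ht0 (by ring)
    have heq : (1 - t) • (0:ℝ) + t • xstar = t * xstar := by
      simp [smul_eq_mul]
    rw [heq] at hconv
    simp only [smul_eq_mul, hp0] at hconv
    have hplog : Real.log (p (t * xstar)) ≤ Real.log v + t * c := by
      calc Real.log (p (t * xstar)) ≤ (1 - t) * Real.log v + t * Real.log q := hconv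
        _ = Real.log v + t * c := by rw [hc_def]; ring
    have hpx : p (t * xstar) ≤ f t := by
      have hp_pos : 0 < p (t * xstar) := (hrange _ hx0).1
      calc p (t * xstar) = Real.exp (Real.log (p (t * xstar))) :=
            (Real.exp_log hp_pos).symm
        _ ≤ f t := Real.exp_le_exp.2 hplog
    have hm := hmin (t * xstar) hx0
    nlinarith [hm, hpx, hℓ.le]
  -- the function whose limit we take
  have hd : HasDerivAt f (q * c) 1 := by
    have h1 : HasDerivAt (fun t : ℝ => Real.log v + t * c) c 1 := by
      simpa using ((hasDerivAt_id (1:ℝ)).mul_const c).const_add (Real.log v)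
    have := h1.exp
    simpa [hf1, hf_def, one_mul, hc_def,
      show Real.log v + (Real.log q - Real.log v) = Real.log q by ring,
      Real.exp_log hq0] using this
  have hslope : Filter.Tendsto (slope f 1) (nhdsWithin 1 {(1:ℝ)}ᶜ) (nhds (q * c)) :=
    hasDerivAt_iff_tendsto_slope.mp hd
  have hslope' : Filter.Tendsto (fun t => ℓ * (-(slope f 1 t)))
      (nhdsWithin 1 (Set.Iio 1)) (nhds (ℓ * (-(q * c)))) := by
    apply Filter.Tendsto.const_mul
    apply Filter.Tendsto.neg
    exact hslope.mono_left (nhdsWithin_mono _ (fun x hx => ne_of_lt hx))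
  have hev : ∀ᶠ t in nhdsWithin 1 (Set.Iio 1), xstar ≤ ℓ * (-(slope f 1 t)) := by
    filter_upwards [Ioo_mem_nhdsLT_of_mem (Set.mem_Ioc.2 ⟨zero_lt_one, le_refl 1⟩)]
      with t ht
    have h1t : 0 < 1 - t := by linarith [ht.2]
    have hk := key t ht
    have hsl : slope f 1 t = (f t - q) / (t - 1) := by
      rw [slope_def_field, hf1]
    rw [hsl]
    have heq2 : ℓ * -((f t - q) / (t - 1)) = ℓ * (f t - q) / (1 - t) := by
      have hne : t - 1 ≠ 0 := by linarith
      field_simp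
      ring
    rw [heq2, le_div_iff₀ h1t]
    nlinarith [hk]
  have hlim : xstar ≤ ℓ * (-(q * c)) :=
    ge_of_tendsto hslope' hev
  -- Final bound: ℓ * (q * (log v - log q)) ≤ ℓ * v / e
  have hlog : Real.log v - Real.log q = Real.log (v / q) := (Real.log_div hv0.ne' hq0.ne').symm
  have hfin : q * Real.log (v / q) ≤ v / Real.exp 1 := by
    have hy0 : 0 < v / q := div_pos hv0 hq0
    have he : 0 < Real.exp 1 := Real.exp_pos 1
    have h2 : Real.log (v / q) ≤ (v / q) / Real.exp 1 := by
      have h3 : Real.log ((v / q) / Real.exp 1) ≤ (v / q) / Real.exp 1 - 1 :=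
        Real.log_le_sub_one_of_pos (div_pos hy0 he)
      have h4 : Real.log ((v / q) / Real.exp 1) = Real.log (v / q) - 1 := by
        rw [Real.log_div hy0.ne' he.ne', Real.log_exp]
      linarith [h3, h4.symm.le]
    calc q * Real.log (v / q) ≤ q * ((v / q) / Real.exp 1) := by
          exact mul_le_mul_of_nonneg_left h2 hq0.le
      _ = v / Real.exp 1 := by field_simp
  calc xstar ≤ ℓ * (-(q * c)) := hlim
    _ = ℓ * (q * Real.log (v / q)) := by rw [hc_def, ← hlog]; ring
    _ ≤ ℓ * (v / Real.exp 1) := mul_le_mul_of_nonneg_left hfin hℓ.le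
    _ = ℓ * v / Real.exp 1 := by ring
end

section
/- For p_GL(x,v) = v^{αx+1} with α > 0 and ℓ > 0 fixed, the candidate optimal investment φ_GL(v) = −log(−ℓα log v)/(α log v) − 1/α, where positive, is not a monotone function of v on (0,1): it tends to a nonpositive value as v → 0⁺ and as v → 1⁻ (where −ℓα log v → 0 makes the expression tend to −∞... specifically φ_GL(v) → −∞ as v → 1⁻ along the region where −ℓα log v < 1), hence φ_GL is zero (after truncation at 0) for v near 0 and near 1 but positive for intermediate v when ℓα is large enough. -/
open Filter Real Set

/-- Non-monotonicity of the Gordon–Loeb candidate optimal investment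
φ_GL(v) = −log(−ℓα log v)/(α log v) − 1/α on (0,1): it tends to the
nonpositive value −1/α as v → 0⁺, tends to −∞ as v → 1⁻, yet is positive
for some intermediate v when ℓα is large enough (ℓα > e); in particular
there are v₁ < v₂ < v₃ in (0,1) with φ(v₁) ≤ 0, φ(v₂) > 0, φ(v₃) ≤ 0. -/
theorem stmt_10 (α ℓ : ℝ) (hα : 0 < α) (hℓ : 0 < ℓ)
    (φ : ℝ → ℝ)
    (hφ : ∀ v ∈ Set.Ioo (0:ℝ) 1,
      φ v = -Real.log (-(ℓ * α * Real.log v)) / (α * Real.log v) - 1 / α) :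
    Filter.Tendsto φ (nhdsWithin 0 (Set.Ioo (0:ℝ) 1)) (nhds (-(1 / α))) ∧
    Filter.Tendsto φ (nhdsWithin 1 (Set.Ioo (0:ℝ) 1)) Filter.atBot ∧
    (Real.exp 1 < ℓ * α →
      ∃ v₁ v₂ v₃ : ℝ, v₁ ∈ Set.Ioo (0:ℝ) 1 ∧ v₂ ∈ Set.Ioo (0:ℝ) 1 ∧
        v₃ ∈ Set.Ioo (0:ℝ) 1 ∧ v₁ < v₂ ∧ v₂ < v₃ ∧
        φ v₁ ≤ 0 ∧ 0 < φ v₂ ∧ φ v₃ ≤ 0) := by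
  have hℓα : 0 < ℓ * α := mul_pos hℓ hα
  -- the formula, rewritten in terms of t = -log v > 0
  have key : ∀ v ∈ Set.Ioo (0:ℝ) 1,
      φ v = Real.log (ℓ * α * (-Real.log v)) / (α * (-Real.log v)) - 1 / α := by
    intro v hv
    rw [hφ v hv]
    have hlv : Real.log v < 0 := Real.log_neg hv.1 hv.2
    have hne : Real.log v ≠ 0 := ne_of_lt hlv
    field_simp
  have hEq : φ =ᶠ[nhdsWithin 0 (Set.Ioo (0:ℝ) 1)]
      fun v => Real.log (ℓ * α * (-Real.log v)) / (α * (-Real.log v)) - 1 / α :=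
    eventually_nhdsWithin_of_forall key
  have hEq1 : φ =ᶠ[nhdsWithin 1 (Set.Ioo (0:ℝ) 1)]
      fun v => Real.log (ℓ * α * (-Real.log v)) / (α * (-Real.log v)) - 1 / α :=
    eventually_nhdsWithin_of_forall key
  refine ⟨?_, ?_, ?_⟩
  · -- v → 0⁺ : φ → -1/α
    have h0 : Tendsto Real.log (nhdsWithin 0 (Set.Ioo (0:ℝ) 1)) atBot :=
      Real.tendsto_log_nhdsGT_zero.mono_left
        (nhdsWithin_mono (0:ℝ) (fun x hx => hx.1 : Set.Ioo (0:ℝ) 1 ⊆ Set.Ioi 0))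
    have h1 : Tendsto (fun v : ℝ => -Real.log v) (nhdsWithin 0 (Set.Ioo (0:ℝ) 1)) atTop :=
      tendsto_neg_atBot_atTop.comp h0
    have h2 : Tendsto (fun s : ℝ => Real.log (ℓ * α * s) / (α * s)) atTop (nhds 0) := by
      have hlog : ∀ᶠ s : ℝ in atTop, Real.log (ℓ * α) / (α * s) + (1/α) * (Real.log s / s)
          = Real.log (ℓ * α * s) / (α * s) := by
        filter_upwards [eventually_gt_atTop (0:ℝ)] with s hs
        rw [Real.log_mul (ne_of_gt hℓα) (ne_of_gt hs)]
        field_simp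
        try ring
      have t1 : Tendsto (fun s : ℝ => Real.log (ℓ * α) / (α * s)) atTop (nhds 0) := by
        apply Tendsto.div_atTop tendsto_const_nhds
        exact Tendsto.const_mul_atTop hα tendsto_id
      have t2 : Tendsto (fun s : ℝ => (1/α) * (Real.log s / s)) atTop (nhds 0) := by
        have h := Real.isLittleO_log_id_atTop.tendsto_div_nhds_zero
        simpa using h.const_mul (1/α)
      have := t1.add t2
      rw [add_zero] at this
      exact Tendsto.congr' hlog this
    have hmain : Tendsto
        (fun v : ℝ => Real.log (ℓ * α * (-Real.log v)) / (α * (-Real.log v)) - 1/α)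
        (nhdsWithin 0 (Set.Ioo (0:ℝ) 1)) (nhds (0 - 1/α)) :=
      (h2.comp h1).sub tendsto_const_nhds
    rw [zero_sub] at hmain
    exact Tendsto.congr' hEq.symm hmain
  · -- v → 1⁻ : φ → -∞
    have h1 : Tendsto (fun v : ℝ => -Real.log v) (nhdsWithin 1 (Set.Ioo (0:ℝ) 1))
        (nhdsWithin 0 (Set.Ioi (0:ℝ))) := by
      rw [tendsto_nhdsWithin_iff]
      constructor
      · have hc : Tendsto Real.log (nhds (1:ℝ)) (nhds 0) := by
          simpa using (Real.continuousAt_log one_ne_zero).tendsto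
        have := (hc.mono_left (nhdsWithin_le_nhds (s := Set.Ioo (0:ℝ) 1))).neg
        simpa using this
      · exact eventually_nhdsWithin_of_forall fun v hv =>
          Set.mem_Ioi.mpr (neg_pos.mpr (Real.log_neg hv.1 hv.2))
    have hmul : ∀ c : ℝ, 0 < c → Tendsto (fun t : ℝ => c * t)
        (nhdsWithin 0 (Set.Ioi (0:ℝ))) (nhdsWithin 0 (Set.Ioi (0:ℝ))) := by
      intro c hc
      rw [tendsto_nhdsWithin_iff]
      constructor
      · have hct : Continuous (fun t : ℝ => c * t) := continuous_const.mul continuous_id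
        have := (hct.tendsto (0:ℝ)).mono_left (nhdsWithin_le_nhds (s := Set.Ioi (0:ℝ)))
        simpa using this
      · exact eventually_nhdsWithin_of_forall fun t ht =>
          Set.mem_Ioi.mpr (mul_pos hc ht)
    have hlogbot : Tendsto (fun v : ℝ => Real.log (ℓ * α * (-Real.log v)))
        (nhdsWithin 1 (Set.Ioo (0:ℝ) 1)) atBot :=
      Real.tendsto_log_nhdsGT_zero.comp ((hmul _ hℓα).comp h1)
    have hinvtop : Tendsto (fun v : ℝ => (α * (-Real.log v))⁻¹)
        (nhdsWithin 1 (Set.Ioo (0:ℝ) 1)) atTop :=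
      tendsto_inv_nhdsGT_zero.comp ((hmul _ hα).comp h1)
    have hprod := hlogbot.atBot_mul_atTop₀ hinvtop
    have hmain : Tendsto
        (fun v : ℝ => Real.log (ℓ * α * (-Real.log v)) / (α * (-Real.log v)) - 1/α)
        (nhdsWithin 1 (Set.Ioo (0:ℝ) 1)) atBot := by
      have := tendsto_atBot_add_const_right _ (-(1/α)) hprod
      refine this.congr fun v => ?_
      simp [div_eq_mul_inv, sub_eq_add_neg]
    exact Tendsto.congr' hEq1.symm hmain
  · -- intermediate values
    intro hE
    have he1 : (1:ℝ) < Real.exp 1 := by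
      have := Real.add_one_lt_exp (one_ne_zero); linarith
    have hE1 : (1:ℝ) < ℓ * α := lt_trans he1 hE
    have hEdiv : Real.exp 1 / (ℓ * α) < 1 := (div_lt_one hℓα).mpr hE
    have m1 : Real.exp (-(2 * (ℓ * α))) ∈ Set.Ioo (0:ℝ) 1 :=
      ⟨Real.exp_pos _, Real.exp_lt_one_iff.mpr (by nlinarith)⟩
    have m2 : Real.exp (-(Real.exp 1 / (ℓ * α))) ∈ Set.Ioo (0:ℝ) 1 :=
      ⟨Real.exp_pos _, Real.exp_lt_one_iff.mpr (neg_neg_iff_pos.mpr (by positivity))⟩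
    have m3 : Real.exp (-(1 / (ℓ * α))) ∈ Set.Ioo (0:ℝ) 1 :=
      ⟨Real.exp_pos _, Real.exp_lt_one_iff.mpr (neg_neg_iff_pos.mpr (by positivity))⟩
    refine ⟨_, _, _, m1, m2, m3, ?_, ?_, ?_, ?_, ?_⟩
    · apply Real.exp_lt_exp.mpr
      nlinarith
    · apply Real.exp_lt_exp.mpr
      apply neg_lt_neg
      gcongr
    · -- φ v₁ ≤ 0
      rw [key _ m1, Real.log_exp, neg_neg]
      have hlog2 : Real.log (ℓ * α * (2 * (ℓ * α))) ≤ 2 * (ℓ * α) := by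
        have e1 : ℓ * α * (2 * (ℓ * α)) = 2 * ((ℓ * α) * (ℓ * α)) := by ring
        rw [e1, Real.log_mul (by norm_num) (by positivity),
          Real.log_mul (ne_of_gt hℓα) (ne_of_gt hℓα)]
        have b1 : Real.log 2 ≤ 2 - 1 := Real.log_le_sub_one_of_pos (by norm_num)
        have b2 : Real.log (ℓ * α) ≤ ℓ * α - 1 := Real.log_le_sub_one_of_pos hℓα
        linarith
      rw [sub_nonpos, div_le_div_iff₀ (by positivity) hα]
      nlinarith
    · -- 0 < φ v₂
      rw [key _ m2, Real.log_exp, neg_neg,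
        mul_div_cancel₀ _ (ne_of_gt hℓα), Real.log_exp, sub_pos,
        div_lt_div_iff₀ hα (by positivity)]
      have h : Real.exp 1 / (ℓ * α) < 1 := hEdiv
      nlinarith
    · -- φ v₃ ≤ 0
      rw [key _ m3, Real.log_exp, neg_neg, mul_one_div,
        div_self (ne_of_gt hℓα), Real.log_one, zero_div, zero_sub, neg_nonpos]
      positivity
end

section
/- Let X ⊆ ℝ, Γ a partially ordered set, and p: X × [0,1] × Γ → ℝ. Assume (a) for every (v,γ) < (v',γ') (i.e., v ≤ v', γ ≤ γ', not both equal), the function x ↦ p(x,v,γ) − p(x,v',γ') is strictly increasing on X, and (b) p is non-increasing in x. Then φ(v,ℓ,γ) = argmin{ℓ·p(x,v,γ) + x : x ∈ X} is non-decreasing in (v,ℓ,γ) for ℓ > 0: if (v,ℓ,γ) ≤ (v',ℓ',γ') with strict inequality in at least one coordinate, then every x ∈ φ(v,ℓ,γ) and x' ∈ φ(v',ℓ',γ') satisfy x ≤ x'. -/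
/-- Theorem 3 (monotone investment in a network): Γ a poset; if
x ↦ p(x,v,γ) − p(x,v',γ') is strictly increasing on X whenever
(v,γ) < (v',γ'), and p is non-increasing in x, then
φ(v,ℓ,γ) = argmin{ℓ·p(x,v,γ) + x : x ∈ X} is non-decreasing in
(v,ℓ,γ) for ℓ > 0. -/
theorem stmt_11 {Γ : Type*} [PartialOrder Γ] (X : Set ℝ)
    (p : ℝ → ℝ → Γ → ℝ)
    (ha : ∀ v v' : ℝ, ∀ γ γ' : Γ, v ∈ Set.Icc (0:ℝ) 1 →
      v' ∈ Set.Icc (0:ℝ) 1 → v ≤ v' → γ ≤ γ' → ¬ (v = v' ∧ γ = γ') →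
      StrictMonoOn (fun x => p x v γ - p x v' γ') X)
    (hb : ∀ v γ, v ∈ Set.Icc (0:ℝ) 1 → AntitoneOn (fun x => p x v γ) X)
    (v v' ℓ ℓ' : ℝ) (γ γ' : Γ)
    (hv : v ∈ Set.Icc (0:ℝ) 1) (hv' : v' ∈ Set.Icc (0:ℝ) 1)
    (hℓ : 0 < ℓ) (hℓ' : 0 < ℓ')
    (hle₁ : v ≤ v') (hle₂ : ℓ ≤ ℓ') (hle₃ : γ ≤ γ')
    (hne : ¬ (v = v' ∧ ℓ = ℓ' ∧ γ = γ'))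
    (x x' : ℝ) (hx : x ∈ X) (hx' : x' ∈ X)
    (hxmin : ∀ z ∈ X, ℓ * p x v γ + x ≤ ℓ * p z v γ + z)
    (hx'min : ∀ z ∈ X, ℓ' * p x' v' γ' + x' ≤ ℓ' * p z v' γ' + z) :
    x ≤ x' := by
  by_contra hlt
  push_neg at hlt  -- x' < x
  have h1 := hxmin x' hx'
  have h2 := hx'min x hx
  -- A = p x v γ - p x' v γ, B = p x v' γ' - p x' v' γ'
  set A := p x v γ - p x' v γ with hA
  set B := p x v' γ' - p x' v' γ' with hB
  have hsum : ℓ * A ≤ ℓ' * B := by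
    have := add_le_add h1 h2
    nlinarith [this]
  have hBle : B ≤ 0 := by
    have := hb v' γ' hv' hx' hx hlt.le
    simp only at this
    linarith
  by_cases hcase : v = v' ∧ γ = γ'
  · -- then ℓ < ℓ'
    obtain ⟨hv1, hg1⟩ := hcase
    have hℓlt : ℓ < ℓ' := lt_of_le_of_ne hle₂ (by tauto)
    have hAB : A = B := by rw [hA, hB, hv1, hg1]
    -- from h1 : ℓ*A + (x - x') ≤ 0 i.e. ℓ*A ≤ x' - x < 0
    have hAneg : A < 0 := by nlinarith
    nlinarith
  · have hstrict := ha v v' γ γ' hv hv' hle₁ hle₃ hcase hx' hx hlt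
    simp only at hstrict
    -- hstrict : p x' v γ - p x' v' γ' < p x v γ - p x v' γ', i.e. B < A
    have hBA : B < A := by rw [hA, hB]; linarith
    nlinarith
end

section
/- Let Ψ(x) = E[x^D] be the probability generating function of a nonnegative-integer-valued random variable D, and fix p, q, q⁺, γ ∈ [0,1] with 0 ≤ q ≤ q⁺ ≤ 1. Then the map y ↦ 1 − γ·Ψ(1 − q·y) − (1−γ)(1−p)·Ψ(1 − q⁺·y) has a fixed point in [0,1], and if the fixed point y(γ) is unique for each γ, then γ ↦ y(γ) is non-increasing in γ. -/
/-- Proposition (local mean-field fixed point): with Ψ the pgf of a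
ℕ-valued random variable D and parameters 0 ≤ q ≤ q⁺ ≤ 1, p, γ ∈ [0,1],
the map y ↦ 1 − γΨ(1−qy) − (1−γ)(1−p)Ψ(1−q⁺y) has a fixed point in
[0,1]; and if the fixed point y(γ) is unique for each γ, then
γ ↦ y(γ) is non-increasing. -/
theorem stmt_13 (μ : PMF ℕ) (Ψ : ℝ → ℝ)
    (hΨ : ∀ x, Ψ x = ∑' n, (μ n).toReal * x ^ n)
    (p q qp : ℝ) (hp : p ∈ Set.Icc (0:ℝ) 1)
    (hq : 0 ≤ q) (hqqp : q ≤ qp) (hqp : qp ≤ 1) :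
    (∀ γ ∈ Set.Icc (0:ℝ) 1, ∃ y ∈ Set.Icc (0:ℝ) 1,
      y = 1 - γ * Ψ (1 - q * y) - (1 - γ) * (1 - p) * Ψ (1 - qp * y)) ∧
    (∀ y : ℝ → ℝ,
      (∀ γ ∈ Set.Icc (0:ℝ) 1, y γ ∈ Set.Icc (0:ℝ) 1 ∧
        (∀ z ∈ Set.Icc (0:ℝ) 1,
          (z = 1 - γ * Ψ (1 - q * z) - (1 - γ) * (1 - p) * Ψ (1 - qp * z))
            ↔ z = y γ)) →
      AntitoneOn y (Set.Icc (0:ℝ) 1)) := by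
  obtain ⟨hp0, hp1⟩ := hp
  have hq1 : q ≤ 1 := hqqp.trans hqp
  have hqp0 : 0 ≤ qp := hq.trans hqqp
  have hμtop : ∀ n, μ n ≠ ⊤ := fun n => μ.apply_ne_top n
  have hμsum : Summable (fun n => (μ n).toReal) :=
    ENNReal.summable_toReal (by rw [μ.tsum_coe]; exact ENNReal.one_ne_top)
  have hΨ1 : Ψ 1 = 1 := by
    rw [hΨ]
    simp only [one_pow, mul_one]
    rw [← ENNReal.tsum_toReal_eq hμtop, μ.tsum_coe, ENNReal.toReal_one]
  have hsumx : ∀ x : ℝ, 0 ≤ x → x ≤ 1 → Summable (fun n => (μ n).toReal * x ^ n) := by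
    intro x hx0 hx1
    apply Summable.of_nonneg_of_le
      (fun n => mul_nonneg ENNReal.toReal_nonneg (pow_nonneg hx0 n))
      (fun n => ?_) hμsum
    calc (μ n).toReal * x ^ n ≤ (μ n).toReal * 1 :=
          mul_le_mul_of_nonneg_left (pow_le_one₀ hx0 hx1) ENNReal.toReal_nonneg
      _ = (μ n).toReal := mul_one _
  have hΨnn : ∀ x : ℝ, 0 ≤ x → x ≤ 1 → 0 ≤ Ψ x := by
    intro x hx0 _
    rw [hΨ]
    exact tsum_nonneg fun n => mul_nonneg ENNReal.toReal_nonneg (pow_nonneg hx0 n)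
  have hΨmono : ∀ a b : ℝ, 0 ≤ a → a ≤ b → b ≤ 1 → Ψ a ≤ Ψ b := by
    intro a b ha0 hab hb1
    rw [hΨ a, hΨ b]
    exact Summable.tsum_le_tsum
      (fun n => mul_le_mul_of_nonneg_left (pow_le_pow_left₀ ha0 hab n) ENNReal.toReal_nonneg)
      (hsumx a ha0 (hab.trans hb1)) (hsumx b (ha0.trans hab) hb1)
  have hΨcont : ContinuousOn Ψ (Set.Icc (0:ℝ) 1) := by
    rw [continuousOn_iff_continuous_restrict]
    have hrw : Set.restrict (Set.Icc (0:ℝ) 1) Ψ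
        = fun x : Set.Icc (0:ℝ) 1 => ∑' n, (μ n).toReal * (x:ℝ) ^ n := by
      funext x; exact hΨ x
    rw [show (Set.Icc (0:ℝ) 1).domRestrict Ψ = Set.restrict (Set.Icc (0:ℝ) 1) Ψ from rfl, hrw]
    apply continuous_tsum (u := fun n => (μ n).toReal)
    · intro i
      exact continuous_const.mul ((continuous_subtype_val).pow i)
    · exact hμsum
    · intro n x
      have hx0 := x.2.1
      have hx1 := x.2.2
      rw [norm_mul, norm_pow, Real.norm_eq_abs, Real.norm_eq_abs,
        abs_of_nonneg ENNReal.toReal_nonneg, abs_of_nonneg hx0]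
      calc (μ n).toReal * (x:ℝ) ^ n ≤ (μ n).toReal * 1 :=
            mul_le_mul_of_nonneg_left (pow_le_one₀ hx0 hx1) ENNReal.toReal_nonneg
        _ = (μ n).toReal := mul_one _
  -- key lemma: fixed point above any subsolution
  have key : ∀ γ : ℝ, 0 ≤ γ → γ ≤ 1 → ∀ a : ℝ, 0 ≤ a → a ≤ 1 →
      a ≤ 1 - γ * Ψ (1 - q * a) - (1 - γ) * (1 - p) * Ψ (1 - qp * a) →
      ∃ z : ℝ, a ≤ z ∧ z ≤ 1 ∧
        z = 1 - γ * Ψ (1 - q * z) - (1 - γ) * (1 - p) * Ψ (1 - qp * z) := by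
    intro γ hγ0 hγ1 a ha0 ha1 hfa
    set G : ℝ → ℝ :=
      fun z => (1 - γ * Ψ (1 - q * z) - (1 - γ) * (1 - p) * Ψ (1 - qp * z)) - z with hG
    have hGcont : ContinuousOn G (Set.Icc a 1) := by
      have hc1 : ContinuousOn (fun z : ℝ => Ψ (1 - q * z)) (Set.Icc a 1) := by
        apply hΨcont.comp (by fun_prop)
        intro z hz
        simp only [Set.mem_Icc]
        constructor <;> nlinarith [hz.1, hz.2]
      have hc2 : ContinuousOn (fun z : ℝ => Ψ (1 - qp * z)) (Set.Icc a 1) := by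
        apply hΨcont.comp (by fun_prop)
        intro z hz
        simp only [Set.mem_Icc]
        constructor <;> nlinarith [hz.1, hz.2]
      exact (((continuousOn_const.sub (continuousOn_const.mul hc1)).sub
        (continuousOn_const.mul hc2)).sub continuousOn_id)
    have hG1 : G 1 ≤ 0 := by
      have h1 : 0 ≤ Ψ (1 - q) := hΨnn _ (by linarith) (by linarith)
      have h2 : 0 ≤ Ψ (1 - qp) := hΨnn _ (by linarith) (by linarith)
      simp only [hG, mul_one]
      nlinarith [mul_nonneg hγ0 h1,
        mul_nonneg (mul_nonneg (by linarith : (0:ℝ) ≤ 1 - γ) (by linarith : (0:ℝ) ≤ 1 - p)) h2]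
    have hGa : 0 ≤ G a := by simp only [hG]; linarith
    have hsub := intermediate_value_Icc' ha1 hGcont
    obtain ⟨z, hz, hz0⟩ := hsub ⟨hG1, hGa⟩
    refine ⟨z, hz.1, hz.2, ?_⟩
    simp only [hG] at hz0
    linarith
  constructor
  · rintro γ ⟨hγ0, hγ1⟩
    obtain ⟨z, hz0, hz1, hzfix⟩ := key γ hγ0 hγ1 0 le_rfl zero_le_one
      (by simp only [mul_zero, sub_zero, hΨ1, mul_one]; nlinarith)
    exact ⟨z, ⟨hz0, hz1⟩, hzfix⟩
  · intro y hy γ₁ hγ₁ γ₂ hγ₂ h12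
    by_contra hlt
    push_neg at hlt
    obtain ⟨⟨h10, h11⟩, hu1⟩ := hy γ₁ hγ₁
    obtain ⟨⟨h20, h21⟩, hu2⟩ := hy γ₂ hγ₂
    have hfix2 : y γ₂ = 1 - γ₂ * Ψ (1 - q * y γ₂) - (1 - γ₂) * (1 - p) * Ψ (1 - qp * y γ₂) :=
      (hu2 (y γ₂) ⟨h20, h21⟩).mpr rfl
    have hΨa0 : 0 ≤ Ψ (1 - qp * y γ₂) := hΨnn _ (by nlinarith) (by nlinarith)
    have hΨab : Ψ (1 - qp * y γ₂) ≤ Ψ (1 - q * y γ₂) :=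
      hΨmono _ _ (by nlinarith) (by nlinarith) (by nlinarith)
    have hdiff : 0 ≤ (γ₂ - γ₁) * (Ψ (1 - q * y γ₂) - (1 - p) * Ψ (1 - qp * y γ₂)) :=
      mul_nonneg (by linarith) (by nlinarith)
    have hle : y γ₂ ≤ 1 - γ₁ * Ψ (1 - q * y γ₂) - (1 - γ₁) * (1 - p) * Ψ (1 - qp * y γ₂) := by
      nlinarith [hdiff, hfix2]
    obtain ⟨z, hz2, hz1, hzfix⟩ := key γ₁ hγ₁.1 hγ₁.2 (y γ₂) h20 h21 hle
    have hz : z = y γ₁ := (hu1 z ⟨h20.trans hz2, hz1⟩).mp hzfix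
    linarith
end

section
/- Let F be a continuous strictly increasing cdf on [0,1] with F(0)=0, F(1)=1, let g, h: [0,1] → ℝ be differentiable with g' ≥ 0 and g' + h' ≥ 0 (positive public and private externalities), h ≥ 0, and c > 0. Define the social welfare W(γ) = g(γ)·∫_γ^1 F⁻¹(1−u)du + (g(γ)+h(γ))·∫_0^γ F⁻¹(1−u)du − c·γ. Then at any market equilibrium γ* (i.e., h(γ*)·F⁻¹(1−γ*) = c), W'(γ*) ≥ 0. Hence the welfare-maximizing fraction of protected agents is at least as large as any market equilibrium fraction. -/
open Set intervalIntegral MeasureTheory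

/-- Welfare theorem: with positive externalities g' ≥ 0 and g' + h' ≥ 0,
social welfare W(γ) = g(γ)∫_γ¹F⁻¹(1−u)du + (g(γ)+h(γ))∫_0^γF⁻¹(1−u)du − cγ
satisfies W'(γ*) ≥ 0 at any market equilibrium γ*
(where h(γ*)·F⁻¹(1−γ*) = c): the planner chooses at least as much
protection as the market. -/
theorem stmt_17 (F Finv g h : ℝ → ℝ) (g' h' : ℝ → ℝ) (c : ℝ) (hc : 0 < c)
    (hFcont : ContinuousOn F (Set.Icc 0 1))
    (hFmono : StrictMonoOn F (Set.Icc 0 1))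
    (hF0 : F 0 = 0) (hF1 : F 1 = 1)
    (hFinv : ∀ x ∈ Set.Icc (0:ℝ) 1, Finv x ∈ Set.Icc (0:ℝ) 1 ∧
      F (Finv x) = x)
    (hFinvcont : ContinuousOn Finv (Set.Icc 0 1))
    (hg' : ∀ γ ∈ Set.Icc (0:ℝ) 1, HasDerivAt g (g' γ) γ)
    (hh' : ∀ γ ∈ Set.Icc (0:ℝ) 1, HasDerivAt h (h' γ) γ)
    (hgpos : ∀ γ ∈ Set.Icc (0:ℝ) 1, 0 ≤ g' γ)
    (hghpos : ∀ γ ∈ Set.Icc (0:ℝ) 1, 0 ≤ g' γ + h' γ)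
    (hhpos : ∀ γ ∈ Set.Icc (0:ℝ) 1, 0 ≤ h γ)
    (W : ℝ → ℝ)
    (hW : ∀ γ, W γ = g γ * (∫ u in γ..1, Finv (1 - u))
        + (g γ + h γ) * (∫ u in (0:ℝ)..γ, Finv (1 - u)) - c * γ)
    (γstar : ℝ) (hγstar : γstar ∈ Set.Icc (0:ℝ) 1)
    (heq : h γstar * Finv (1 - γstar) = c)
    (Wd : ℝ) (hWd : HasDerivAt W Wd γstar) :
    0 ≤ Wd := by
  obtain ⟨hγ0, hγ1⟩ := hγstar
  set f : ℝ → ℝ := fun u => Finv (1 - u) with hf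
  have hmap : ∀ u ∈ Set.Icc (0:ℝ) 1, (1 - u) ∈ Set.Icc (0:ℝ) 1 := by
    intro u hu; exact ⟨by linarith [hu.2], by linarith [hu.1]⟩
  have hfcont : ContinuousOn f (Set.Icc 0 1) := by
    apply hFinvcont.comp (continuousOn_const.sub continuousOn_id) hmap
  have hfnn : ∀ u ∈ Set.Icc (0:ℝ) 1, 0 ≤ f u := by
    intro u hu; exact ((hFinv (1 - u) (hmap u hu)).1).1
  have hint : ∀ a b : ℝ, a ∈ Set.Icc (0:ℝ) 1 → b ∈ Set.Icc (0:ℝ) 1 →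
      IntervalIntegrable f volume a b := by
    intro a b ha hb
    apply (hfcont.mono _).intervalIntegrable
    exact Set.uIcc_subset_Icc ha hb
  haveI : Fact (γstar ∈ Set.Icc (0:ℝ) 1) := ⟨⟨hγ0, hγ1⟩⟩
  have hmeas : StronglyMeasurableAtFilter f (nhdsWithin γstar (Set.Icc 0 1)) :=
    hfcont.stronglyMeasurableAtFilter_nhdsWithin measurableSet_Icc γstar
  have hcw : ContinuousWithinAt f (Set.Icc 0 1) γstar := hfcont γstar ⟨hγ0, hγ1⟩
  -- derivative of γ ↦ ∫_0^γ f
  have hB : HasDerivWithinAt (fun γ => ∫ u in (0:ℝ)..γ, f u) (f γstar)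
      (Set.Icc 0 1) γstar :=
    intervalIntegral.integral_hasDerivWithinAt_right
      (hint 0 γstar (Set.left_mem_Icc.2 zero_le_one) ⟨hγ0, hγ1⟩) hmeas hcw
  -- derivative of γ ↦ ∫_γ^1 f
  have hA : HasDerivWithinAt (fun γ => ∫ u in γ..(1:ℝ), f u) (-(f γstar))
      (Set.Icc 0 1) γstar :=
    intervalIntegral.integral_hasDerivWithinAt_left
      (hint γstar 1 ⟨hγ0, hγ1⟩ (Set.right_mem_Icc.2 zero_le_one)) hmeas hcw
  have hgd : HasDerivWithinAt g (g' γstar) (Set.Icc 0 1) γstar :=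
    (hg' γstar ⟨hγ0, hγ1⟩).hasDerivWithinAt
  have hhd : HasDerivWithinAt h (h' γstar) (Set.Icc 0 1) γstar :=
    (hh' γstar ⟨hγ0, hγ1⟩).hasDerivWithinAt
  set A : ℝ := ∫ u in γstar..(1:ℝ), f u with hAdef
  set B : ℝ := ∫ u in (0:ℝ)..γstar, f u with hBdef
  set D : ℝ := (g' γstar * A + g γstar * (-(f γstar)))
      + ((g' γstar + h' γstar) * B + (g γstar + h γstar) * f γstar) - c * 1 with hDdef
  have hWD : HasDerivWithinAt W D (Set.Icc 0 1) γstar := by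
    have : HasDerivWithinAt (fun γ => g γ * (∫ u in γ..(1:ℝ), f u)
        + (g γ + h γ) * (∫ u in (0:ℝ)..γ, f u) - c * γ) D (Set.Icc 0 1) γstar := by
      exact ((hgd.mul hA).add ((hgd.add hhd).mul hB)).sub
        ((hasDerivWithinAt_id γstar _).const_mul c)
    exact this.congr (fun x _ => (hW x)) (hW γstar)
  have hud : UniqueDiffWithinAt ℝ (Set.Icc (0:ℝ) 1) γstar :=
    (uniqueDiffOn_Icc zero_lt_one) γstar ⟨hγ0, hγ1⟩
  have hWeq : Wd = D := by
    rw [← hWd.hasDerivWithinAt.derivWithin hud, hWD.derivWithin hud]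
  have hAnn : 0 ≤ A := by
    apply intervalIntegral.integral_nonneg hγ1
    intro u hu; exact hfnn u ⟨le_trans hγ0 hu.1, hu.2⟩
  have hBnn : 0 ≤ B := by
    apply intervalIntegral.integral_nonneg hγ0
    intro u hu; exact hfnn u ⟨hu.1, le_trans hu.2 hγ1⟩
  have hg'nn := hgpos γstar ⟨hγ0, hγ1⟩
  have hgh'nn := hghpos γstar ⟨hγ0, hγ1⟩
  have : h γstar * f γstar = c := heq
  rw [hWeq, hDdef]
  nlinarith [mul_nonneg hg'nn hAnn, mul_nonneg hgh'nn hBnn]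
end

section
/- Let Ψ be the pgf of a Poisson(λ) distribution, Ψ(x) = exp(λ(x−1)), with λ > 0, and parameters p ∈ (0,1), q⁺ ∈ (0,1], q = 0, γ ∈ [0,1]. Then the fixed point equation y = 1 − γ − (1−γ)(1−p)·exp(−λq⁺y) has a unique solution y(γ) ∈ [0,1], and h(γ) := 1 − (1−p)exp(−λq⁺·y(γ)) is non-increasing in γ with h(1) = ... = p (when γ=1, y(1)=0 and h(1) = 1 − (1−p) = p). -/
/-- Key comparison lemma: fixed points are antitone in γ. -/
private lemma keyC (lam p qp : ℝ) (hlam : 0 < lam)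
    (hp : p ∈ Set.Ioo (0:ℝ) 1) (hqp : qp ∈ Set.Ioc (0:ℝ) 1)
    {γ1 γ2 y1 y2 : ℝ} (hγ2 : γ2 ≤ 1) (hle : γ1 ≤ γ2)
    (hy1 : 0 ≤ y1) (hy2 : 0 ≤ y2)
    (e1 : y1 = 1 - γ1 - (1 - γ1) * (1 - p) * Real.exp (-(lam * qp * y1)))
    (e2 : y2 = 1 - γ2 - (1 - γ2) * (1 - p) * Real.exp (-(lam * qp * y2))) :
    y2 ≤ y1 := by
  by_contra hlt
  push_neg at hlt
  have hc : 0 < lam * qp := mul_pos hlam hqp.1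
  have hy2pos : 0 < y2 := lt_of_le_of_lt hy1 hlt
  set s := y1 / y2 with hs
  have hs0 : 0 ≤ s := div_nonneg hy1 hy2pos.le
  have hs1 : s < 1 := (div_lt_one hy2pos).2 hlt
  have hsy : y1 = s * y2 := by rw [hs]; exact (div_mul_cancel₀ y1 hy2pos.ne').symm
  set E1 := Real.exp (-(lam * qp * y1)) with hE1
  set E2 := Real.exp (-(lam * qp * y2)) with hE2
  have hE1pos : 0 < E1 := Real.exp_pos _
  have hE1le : E1 ≤ 1 := Real.exp_le_one_iff.2 (by nlinarith)
  -- convexity of exp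
  have hconv : E1 ≤ (1 - s) + s * E2 := by
    have h := convexOn_exp.2 (Set.mem_univ (0:ℝ)) (Set.mem_univ (-(lam*qp*y2)))
      (by linarith : (0:ℝ) ≤ 1 - s) hs0 (by ring)
    simp only [smul_eq_mul, mul_zero, zero_add, Real.exp_zero, mul_one] at h
    have harg : s * -(lam*qp*y2) = -(lam*qp*y1) := by rw [hsy]; ring
    rw [harg] at h
    rw [hE1]
    linarith [h]
  -- monotone in γ
  have hfact : 0 ≤ 1 - (1-p)*E1 := by nlinarith [hp.1, hp.2, hE1pos, hE1le]
  have hmono : 0 ≤ y1 - (1 - γ2 - (1-γ2)*(1-p)*E1) := by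
    nlinarith [mul_nonneg (sub_nonneg.2 hle) hfact]
  -- convexity bound
  have hcb : y1 - (1 - γ2 - (1-γ2)*(1-p)*E1) ≤ -(1-s)*(1-γ2)*p := by
    have hcoef : 0 ≤ (1-γ2)*(1-p) := mul_nonneg (by linarith) (by linarith [hp.2])
    nlinarith [mul_le_mul_of_nonneg_left hconv hcoef]
  have hγ2eq : γ2 = 1 := by
    nlinarith [hp.1, mul_pos (mul_pos (by linarith : (0:ℝ) < 1 - s)
      (by linarith [hp.1] : (0:ℝ) < p)) (lt_of_le_of_lt (le_refl 0) hy2pos)]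
  rw [hγ2eq] at e2
  norm_num at e2
  linarith

/-- Erdős–Rényi / Poisson specialization with strong protection (q = 0):
the fixed point equation y = 1 − γ − (1−γ)(1−p)·exp(−λq⁺y) has a unique
solution y(γ) ∈ [0,1] for each γ ∈ [0,1], and
h(γ) = 1 − (1−p)·exp(−λq⁺·y(γ)) is non-increasing with h(1) = p. -/
theorem stmt_19 (lam p qp : ℝ) (hlam : 0 < lam)
    (hp : p ∈ Set.Ioo (0:ℝ) 1) (hqp : qp ∈ Set.Ioc (0:ℝ) 1) :
    (∀ γ ∈ Set.Icc (0:ℝ) 1, ∃! y, y ∈ Set.Icc (0:ℝ) 1 ∧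
      y = 1 - γ - (1 - γ) * (1 - p) * Real.exp (-(lam * qp * y))) ∧
    (∀ y : ℝ → ℝ,
      (∀ γ ∈ Set.Icc (0:ℝ) 1, y γ ∈ Set.Icc (0:ℝ) 1 ∧
        y γ = 1 - γ - (1 - γ) * (1 - p) * Real.exp (-(lam * qp * y γ))) →
      AntitoneOn (fun γ => 1 - (1 - p) * Real.exp (-(lam * qp * y γ)))
          (Set.Icc (0:ℝ) 1) ∧
        1 - (1 - p) * Real.exp (-(lam * qp * y 1)) = p) := by
  have hc : 0 < lam * qp := mul_pos hlam hqp.1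
  constructor
  · intro γ hγ
    obtain ⟨hγ0, hγ1⟩ := hγ
    -- existence via IVT
    set G : ℝ → ℝ := fun z => z - (1 - γ - (1 - γ) * (1 - p) * Real.exp (-(lam * qp * z))) with hG
    have hcont : ContinuousOn G (Set.Icc 0 1) := by
      apply Continuous.continuousOn
      fun_prop
    have hG0 : G 0 ≤ 0 := by
      simp only [hG]
      norm_num
      nlinarith [hp.1]
    have hG1 : 0 ≤ G 1 := by
      simp only [hG]
      have hE := Real.exp_pos (-(lam*qp*1))
      nlinarith [mul_nonneg (mul_nonneg (by linarith : (0:ℝ) ≤ 1 - γ)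
        (by linarith [hp.2] : (0:ℝ) ≤ 1 - p)) hE.le]
    have := intermediate_value_Icc (zero_le_one) hcont
    have h0mem : (0:ℝ) ∈ Set.Icc (G 0) (G 1) := ⟨hG0, hG1⟩
    obtain ⟨y0, hy0mem, hy0⟩ := this h0mem
    refine ⟨y0, ⟨hy0mem, by simp only [hG] at hy0; linarith⟩, ?_⟩
    intro z ⟨hzmem, hzeq⟩
    have hy0eq : y0 = 1 - γ - (1 - γ) * (1 - p) * Real.exp (-(lam * qp * y0)) := by
      simp only [hG] at hy0; linarith
    have h1 := keyC lam p qp hlam hp hqp hγ1 (le_refl γ) hzmem.1 hy0mem.1 hzeq hy0eq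
    have h2 := keyC lam p qp hlam hp hqp hγ1 (le_refl γ) hy0mem.1 hzmem.1 hy0eq hzeq
    linarith
  · intro y hy
    constructor
    · intro a ha b hb hab
      have hya := hy a ha
      have hyb := hy b hb
      have hle : y b ≤ y a :=
        keyC lam p qp hlam hp hqp hb.2 hab hya.1.1 hyb.1.1 hya.2 hyb.2
      simp only
      have hexp : Real.exp (-(lam*qp* y a)) ≤ Real.exp (-(lam*qp* y b)) :=
        Real.exp_le_exp.2 (by nlinarith)
      nlinarith [hp.2]
    · have h1 := (hy 1 ⟨zero_le_one, le_refl 1⟩).2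
      norm_num at h1
      rw [h1]
      norm_num
end
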